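/- arXiv:0906.0884 — 5 statements merged into one kernel-verified Lean document; each statement's English description precedes it below -/
import Mathlib

section
/- If a : [-1,1] → (0,∞) is a twice continuously differentiable even function solving ä - 3ȧ²/(2a) + 32a³ = 0 on [-1,1], then there exists R ∈ ℝ such that a(t) = R/(4(1+R²t²)) for all t ∈ [-1,1]. -/
/-!
Multiplying the equation by `2ȧ/a³` shows that the energy `ȧ²/a³ + 64 a` is conserved, and since
`ȧ(0) = 0` for an even `a` it equals `64 a(0)`. The equation then reads `(ȧ/a²)˙ = -32 a(0)`, so
`(1/a)¨ = 32 a(0)` and `1/a(t) = 1/a(0) + 16 a(0) t²`: this is the claimed profile with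
`R = 4 a(0)`.
-/

open Set

theorem Function.Even.deriv_zero {F : Type*} [NormedAddCommGroup F] [NormedSpace ℝ F]
    {f : ℝ → F} (hf : Function.Even f) : deriv f 0 = 0 := by
  have h := deriv_comp_neg f (0 : ℝ)
  rw [show (fun x => f (-x)) = f from funext hf, neg_zero, ← sub_eq_zero, sub_neg_eq_add,
    ← two_smul ℝ, smul_eq_zero] at h
  exact h.resolve_left two_ne_zero

theorem Convex.eq_of_forall_hasDerivAt_zero {s : Set ℝ} {f : ℝ → ℝ} (hs : Convex ℝ s)
    (hf : ∀ x ∈ s, HasDerivAt f 0 x) {x y : ℝ} (hx : x ∈ s) (hy : y ∈ s) : f x = f y := by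
  have h := hs.norm_image_sub_le_of_norm_hasDerivWithin_le (C := 0)
    (fun z hz => (hf z hz).hasDerivWithinAt) (fun _ _ => by simp) hx hy
  rw [zero_mul, norm_le_zero_iff, sub_eq_zero] at h
  exact h.symm

section ODE

variable {a : ℝ → ℝ} {t : ℝ}

theorem two_mul_mul_deriv_deriv_eq_of_ode (hat : a t ≠ 0)
    (hode : deriv (deriv a) t - 3 * deriv a t ^ 2 / (2 * a t) + 32 * a t ^ 3 = 0) :
    2 * a t * deriv (deriv a) t = 3 * deriv a t ^ 2 - 64 * a t ^ 4 := by
  field_simp at hode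
  linear_combination hode

theorem hasDerivAt_energy_of_ode (ha : DifferentiableAt ℝ a t)
    (ha' : DifferentiableAt ℝ (deriv a) t) (hat : a t ≠ 0)
    (hode : deriv (deriv a) t - 3 * deriv a t ^ 2 / (2 * a t) + 32 * a t ^ 3 = 0) :
    HasDerivAt (fun s => deriv a s ^ 2 / a s ^ 3 + 64 * a s) 0 t := by
  refine (((ha'.hasDerivAt.fun_pow 2).fun_div (ha.hasDerivAt.fun_pow 3)
    (pow_ne_zero 3 hat)).fun_add (ha.hasDerivAt.const_mul 64)).congr_deriv ?_
  simp only [Nat.cast_ofNat, Nat.reduceSub, pow_one]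
  field_simp
  linear_combination deriv a t * two_mul_mul_deriv_deriv_eq_of_ode hat hode

theorem hasDerivAt_deriv_div_sq_of_ode (ha : DifferentiableAt ℝ a t)
    (ha' : DifferentiableAt ℝ (deriv a) t) (hat : a t ≠ 0)
    (hode : deriv (deriv a) t - 3 * deriv a t ^ 2 / (2 * a t) + 32 * a t ^ 3 = 0) :
    HasDerivAt (fun s => deriv a s / a s ^ 2) (-(deriv a t ^ 2 / a t ^ 3 + 64 * a t) / 2) t := by
  refine (ha'.hasDerivAt.fun_div (ha.hasDerivAt.fun_pow 2) (pow_ne_zero 2 hat)).congr_deriv ?_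
  simp only [Nat.cast_ofNat, Nat.reduceSub, pow_one]
  field_simp
  linear_combination two_mul_mul_deriv_deriv_eq_of_ode hat hode

end ODE

section Integration

variable {a : ℝ → ℝ} {s : Set ℝ}

theorem energy_eq_of_ode (hs : Convex ℝ s) (h0 : 0 ∈ s) (ha : ContDiff ℝ 2 a)
    (hne : ∀ t ∈ s, a t ≠ 0)
    (hode : ∀ t ∈ s, deriv (deriv a) t - 3 * deriv a t ^ 2 / (2 * a t) + 32 * a t ^ 3 = 0)
    (hd0 : deriv a 0 = 0) {t : ℝ} (ht : t ∈ s) :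
    deriv a t ^ 2 / a t ^ 3 + 64 * a t = 64 * a 0 := by
  have ha' : Differentiable ℝ (deriv a) := (ha.deriv' (n := 1)).differentiable one_ne_zero
  rw [hs.eq_of_forall_hasDerivAt_zero (fun x hx => hasDerivAt_energy_of_ode
    (ha.differentiable two_ne_zero x) (ha' x) (hne x hx) (hode x hx)) ht h0, hd0]
  ring

theorem deriv_div_sq_eq_of_ode (hs : Convex ℝ s) (h0 : 0 ∈ s) (ha : ContDiff ℝ 2 a)
    (hne : ∀ t ∈ s, a t ≠ 0)
    (hode : ∀ t ∈ s, deriv (deriv a) t - 3 * deriv a t ^ 2 / (2 * a t) + 32 * a t ^ 3 = 0)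
    (hd0 : deriv a 0 = 0) {t : ℝ} (ht : t ∈ s) :
    deriv a t / a t ^ 2 = -32 * a 0 * t := by
  have ha' : Differentiable ℝ (deriv a) := (ha.deriv' (n := 1)).differentiable one_ne_zero
  have hderiv : ∀ x ∈ s, HasDerivAt (fun y => deriv a y / a y ^ 2 + 32 * a 0 * y) 0 x := by
    intro x hx
    refine ((hasDerivAt_deriv_div_sq_of_ode (ha.differentiable two_ne_zero x) (ha' x) (hne x hx)
      (hode x hx)).fun_add ((hasDerivAt_id x).const_mul (32 * a 0))).congr_deriv ?_
    rw [energy_eq_of_ode hs h0 ha hne hode hd0 hx]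
    ring
  have h := hs.eq_of_forall_hasDerivAt_zero hderiv ht h0
  simp only [hd0, zero_div, mul_zero, add_zero] at h
  linear_combination h

theorem inv_eq_of_ode (hs : Convex ℝ s) (h0 : 0 ∈ s) (ha : ContDiff ℝ 2 a)
    (hne : ∀ t ∈ s, a t ≠ 0)
    (hode : ∀ t ∈ s, deriv (deriv a) t - 3 * deriv a t ^ 2 / (2 * a t) + 32 * a t ^ 3 = 0)
    (hd0 : deriv a 0 = 0) {t : ℝ} (ht : t ∈ s) :
    (a t)⁻¹ = (a 0)⁻¹ + 16 * a 0 * t ^ 2 := by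
  have hderiv : ∀ x ∈ s, HasDerivAt (fun y => (a y)⁻¹ - 16 * a 0 * y ^ 2) 0 x := by
    intro x hx
    refine (((ha.differentiable two_ne_zero x).hasDerivAt.fun_inv (hne x hx)).sub
      ((hasDerivAt_pow 2 x).const_mul (16 * a 0))).congr_deriv ?_
    rw [neg_div, deriv_div_sq_eq_of_ode hs h0 ha hne hode hd0 hx]
    ring
  have h := hs.eq_of_forall_hasDerivAt_zero hderiv ht h0
  linear_combination h

end Integration

/-- If `a` is a positive, even, twice continuously differentiable solution of
`ä - 3 ȧ² / (2 a) + 32 a³ = 0` on `[-1, 1]`, then `a t = R / (4 (1 + R² t²))` on `[-1,1]`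
for some real `R`. -/
theorem stmt1 (a : ℝ → ℝ) (ha : ContDiff ℝ 2 a)
    (hpos : ∀ t ∈ Icc (-1 : ℝ) 1, 0 < a t)
    (heven : ∀ t, a (-t) = a t)
    (hode : ∀ t ∈ Icc (-1 : ℝ) 1,
      deriv (deriv a) t - 3 * (deriv a t) ^ 2 / (2 * a t) + 32 * a t ^ 3 = 0) :
    ∃ R : ℝ, ∀ t ∈ Icc (-1 : ℝ) 1, a t = R / (4 * (1 + R ^ 2 * t ^ 2)) := by
  have h0 : (0 : ℝ) ∈ Icc (-1 : ℝ) 1 := by norm_num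
  have hne : ∀ t ∈ Icc (-1 : ℝ) 1, a t ≠ 0 := fun t ht => (hpos t ht).ne'
  refine ⟨4 * a 0, fun t ht => ?_⟩
  have hinv := inv_eq_of_ode (convex_Icc _ _) h0 ha hne hode (Function.Even.deriv_zero heven) ht
  rw [← inv_inv (a t), hinv]
  field_simp [hne 0 h0]
  ring
end

section
/- With u as in the previous counterexample (u(x,t) = (1+it)^{-2k-n/2}(1+|x|²)^{-k} e^{-(1-it)|x|²/(4(1+t²))}, k > n/2), the functions e^{|x|²/8} u(x, 1) and e^{|x|²/8} u(x, -1) belong to L²(ℝⁿ), and u is not identically zero. -/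
/-!
On `|t| = 1` the Gaussian factor of `u(x, t)` has modulus `e^{-|x|²/8}`, which exactly cancels the
weight `e^{|x|²/4}` in `e^{|x|²/4} |u(x, t)|²`. What remains is a constant multiple of
`(1 + |x|²)^{-2k}`, which is integrable on `ℝⁿ` precisely because `4k > n`.
-/

open MeasureTheory

theorem integrable_one_add_sum_sq_rpow_neg {ι : Type*} [Fintype ι] {r : ℝ}
    (hr : (Fintype.card ι : ℝ) < 2 * r) :
    Integrable (fun x : ι → ℝ => (1 + ∑ i, x i ^ 2) ^ (-r)) := by
  have h_euclid : (fun x : ι → ℝ => (1 + ∑ i, x i ^ 2) ^ (-r)) =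
      (fun y : EuclideanSpace ℝ ι => (1 + ‖y‖ ^ 2) ^ (-(2 * r) / 2)) ∘ WithLp.toLp 2 := by
    ext x
    simp only [Function.comp_apply, EuclideanSpace.real_norm_sq_eq]
    ring_nf
  rw [h_euclid]
  exact (PiLp.volume_preserving_toLp ι).integrable_comp_of_integrable
    (integrable_rpow_neg_one_add_norm_sq (by simpa using hr))

theorem norm_exp_heat_phase (s t : ℝ) :
    ‖Complex.exp (-((1 - Complex.I * t) / (4 * ((1 + t ^ 2 : ℝ) : ℂ))) * s)‖ =
      Real.exp (-(s / (4 * (1 + t ^ 2)))) := by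
  have h_real : (4 * ((1 + t ^ 2 : ℝ) : ℂ)) = ((4 * (1 + t ^ 2) : ℝ) : ℂ) := by push_cast; ring
  rw [Complex.norm_exp, h_real, neg_mul, Complex.neg_re, div_mul_eq_mul_div,
    Complex.div_ofReal_re]
  simp

theorem exp_mul_norm_sq_eq_of_sq_eq_one (c : ℂ) {k s t : ℝ} (hs : 0 ≤ s) (ht : t ^ 2 = 1) :
    Real.exp (s / 4) * ‖(1 + Complex.I * t) ^ c * (((1 + s) ^ (-k) : ℝ) : ℂ) *
        Complex.exp (-((1 - Complex.I * t) / (4 * ((1 + t ^ 2 : ℝ) : ℂ))) * s)‖ ^ 2 =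
      ‖(1 + Complex.I * t) ^ c‖ ^ 2 * (1 + s) ^ (-(2 * k)) := by
  have h_weight : Real.exp (s / 4) * Real.exp (-(s / (4 * (1 + t ^ 2)))) ^ 2 = 1 := by
    rw [ht, ← Real.exp_nat_mul, ← Real.exp_add, Real.exp_eq_one_iff]
    push_cast
    ring
  have h_decay : ((1 + s) ^ (-k)) ^ 2 = (1 + s) ^ (-(2 * k)) := by
    rw [← Real.rpow_natCast, ← Real.rpow_mul (by linarith)]
    ring_nf
  rw [norm_mul, norm_mul, norm_exp_heat_phase, Complex.norm_real,
    Real.norm_of_nonneg (by positivity), mul_pow, mul_pow, h_decay]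
  linear_combination (‖(1 + Complex.I * t) ^ c‖ ^ 2 * (1 + s) ^ (-(2 * k))) * h_weight

/-- For `u(x,t) = (1+it)^{-2k-n/2}(1+|x|²)^{-k} e^{-(1-it)|x|²/(4(1+t²))}` with `k > n/2`,
the functions `e^{|x|²/8} u(x, ±1)` belong to `L²(ℝⁿ)` (i.e. `∫ e^{|x|²/4}|u(x,±1)|² dx < ∞`),
and `u` is not identically zero. -/
theorem stmt6 (n : ℕ) (k : ℝ) (hk : (n : ℝ) / 2 < k)
    (u : (Fin n → ℝ) → ℝ → ℂ)
    (hu : ∀ (x : Fin n → ℝ) (t : ℝ), u x t =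
      ((1 : ℂ) + Complex.I * (t : ℂ)) ^ ((-(2 * k + (n : ℝ) / 2) : ℝ) : ℂ) *
        (((1 + ∑ i, (x i) ^ 2) ^ (-k) : ℝ) : ℂ) *
        Complex.exp (-((1 - Complex.I * (t : ℂ)) / (4 * ((1 + t ^ 2 : ℝ) : ℂ))) *
          ((∑ i, (x i) ^ 2 : ℝ) : ℂ))) :
    Integrable (fun x : Fin n → ℝ =>
        Real.exp ((∑ i, (x i) ^ 2) / 4) * ‖u x 1‖ ^ 2) ∧
    Integrable (fun x : Fin n → ℝ =>
        Real.exp ((∑ i, (x i) ^ 2) / 4) * ‖u x (-1)‖ ^ 2) ∧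
    ∃ (x : Fin n → ℝ) (t : ℝ), u x t ≠ 0 := by
  have h_weighted : ∀ t : ℝ, t ^ 2 = 1 →
      Integrable (fun x : Fin n → ℝ => Real.exp ((∑ i, (x i) ^ 2) / 4) * ‖u x t‖ ^ 2) := by
    intro t ht
    have h_decay : Integrable (fun x : Fin n → ℝ => (1 + ∑ i, x i ^ 2) ^ (-(2 * k))) :=
      integrable_one_add_sum_sq_rpow_neg (by rw [Fintype.card_fin]; linarith)
    refine (h_decay.const_mul (‖(1 + Complex.I * t) ^ ((-(2 * k + n / 2) : ℝ) : ℂ)‖ ^ 2)).congr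
      (ae_of_all _ fun x => ?_)
    dsimp only
    rw [hu, exp_mul_norm_sq_eq_of_sq_eq_one _ (by positivity) ht]
  exact ⟨h_weighted 1 (by norm_num), h_weighted (-1) (by norm_num), 0, 0,
    by simp [hu]⟩
end

section
/- Under the hypotheses of the abstract convexity lemma, with D(t) = ⟨Sf,f⟩, one has Ḋ(t) ≥ ⟨S_t f + [S,A]f, f⟩ - (1/2)‖∂ₜf - Af - Sf‖², where [S,A] = SA - AS and S_t is the time derivative of S. -/
/-!
Write `u = f`, `v = ∂ₜf` and `w = v - Au - Su`. Symmetry of `S` gives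
`Ḋ = Re⟨S_t u, u⟩ + 2 Re⟨v, Su⟩`, and skew-symmetry of `A` gives `Re⟨[S,A]u, u⟩ = 2 Re⟨Au, Su⟩`.
The difference of the two sides of the inequality is therefore
`2 Re⟨w, Su⟩ + 2‖Su‖² + ½‖w‖² = ½‖w + 2Su‖² ≥ 0`.
-/

open RCLike

section

variable {𝕜 E : Type*} [RCLike 𝕜] [NormedAddCommGroup E] [InnerProductSpace 𝕜 E]

local notation "⟪" x ", " y "⟫" => inner 𝕜 x y

theorem neg_half_norm_sq_le_two_re_inner_add_two_norm_sq (w x : E) :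
    -(1 / 2) * ‖w‖ ^ 2 ≤ 2 * re ⟪w, x⟫ + 2 * ‖x‖ ^ 2 := by
  have hsq : ‖w + (2 : 𝕜) • x‖ ^ 2 = ‖w‖ ^ 2 + 4 * re ⟪w, x⟫ + 4 * ‖x‖ ^ 2 := by
    rw [norm_add_sq (𝕜 := 𝕜), inner_smul_right, norm_smul, mul_pow, ofNat_mul_re,
      RCLike.norm_ofNat]
    ring
  nlinarith [sq_nonneg ‖w + (2 : 𝕜) • x‖]

theorem re_inner_commutator_apply_self {S A : E →ₗ[𝕜] E} (hS : S.IsSymmetric)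
    (hA : ∀ g h, ⟪A g, h⟫ = -⟪g, A h⟫) (u : E) :
    re ⟪S (A u) - A (S u), u⟫ = 2 * re ⟪A u, S u⟫ := by
  rw [inner_sub_left, map_sub, hS, hA, map_neg, inner_re_symm (A (S u))]
  ring

theorem re_inner_commutator_sub_half_norm_sq_le {S A : E →ₗ[𝕜] E} (hS : S.IsSymmetric)
    (hA : ∀ g h, ⟪A g, h⟫ = -⟪g, A h⟫) (u v : E) :
    re ⟪S (A u) - A (S u), u⟫ - 1 / 2 * ‖v - A u - S u‖ ^ 2 ≤ 2 * re ⟪S v, u⟫ := by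
  have hv : re ⟪S v, u⟫ = re ⟪v - A u - S u, S u⟫ + re ⟪A u, S u⟫ + ‖S u‖ ^ 2 := by
    rw [hS, ← inner_self_eq_norm_sq (𝕜 := 𝕜), ← map_add, ← map_add,
      ← inner_add_left, ← inner_add_left]
    congr 2
    abel
  rw [re_inner_commutator_apply_self hS hA, hv]
  linarith [neg_half_norm_sq_le_two_re_inner_add_two_norm_sq (𝕜 := 𝕜) (v - A u - S u) (S u)]

theorem HasDerivAt.re_inner_apply_self [NormedSpace ℝ E] {S : ℝ → E →ₗ[𝕜] E} {f : ℝ → E}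
    {S'f f' : E} {t : ℝ} (hS : (S t).IsSymmetric) (hf : HasDerivAt f f' t)
    (hSf : HasDerivAt (fun τ => S τ (f τ)) (S'f + S t f') t) :
    HasDerivAt (fun τ => re ⟪S τ (f τ), f τ⟫) (re ⟪S'f, f t⟫ + 2 * re ⟪S t f', f t⟫) t := by
  have h := (reCLM (K := 𝕜)).hasFDerivAt.comp_hasDerivAt t (hSf.inner 𝕜 hf)
  refine h.congr_deriv ?_
  rw [reCLM_apply, map_add, inner_add_left, map_add, hS (f t) f', inner_re_symm (f t)]
  ring

end

theorem stmt8_general (E : Type*) [NormedAddCommGroup E] [InnerProductSpace ℂ E]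
    (S A S' : ℝ → E →ₗ[ℂ] E) (f f' : ℝ → E)
    (hS : ∀ t (g h : E), (inner ℂ (S t g) h : ℂ) = inner ℂ g (S t h))
    (hA : ∀ t (g h : E), (inner ℂ (A t g) h : ℂ) = -inner ℂ g (A t h))
    (hf : ∀ t, HasDerivAt f (f' t) t)
    (hSf : ∀ t, HasDerivAt (fun τ => S τ (f τ)) (S' t (f t) + S t (f' t)) t) :
    ∀ t : ℝ, deriv (fun τ => (inner ℂ (S τ (f τ)) (f τ) : ℂ).re) t ≥
      (inner ℂ (S' t (f t) + (S t (A t (f t)) - A t (S t (f t)))) (f t) : ℂ).re -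
        (1 / 2) * ‖f' t - A t (f t) - S t (f t)‖ ^ 2 := by
  intro t
  have hD := HasDerivAt.re_inner_apply_self (hS t) (hf t) (hSf t)
  simp only [re_to_complex] at hD
  have hcomm := re_inner_commutator_sub_half_norm_sq_le (hS t) (hA t) (f t) (f' t)
  simp only [re_to_complex] at hcomm
  rw [hD.deriv, inner_add_left, Complex.add_re]
  linarith

/-- With `S(t)` symmetric, `A(t)` skew-symmetric, `f` a differentiable curve and
`D(t) = ⟨S(t)f(t), f(t)⟩`, one has
`Ḋ ≥ ⟨S_t f + [S,A]f, f⟩ - (1/2)‖∂ₜf - Af - Sf‖²`. -/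
theorem stmt8 (E : Type*) [NormedAddCommGroup E] [InnerProductSpace ℂ E]
    (S A S' : ℝ → E →ₗ[ℂ] E) (f f' : ℝ → E)
    (hS : ∀ t (g h : E), (inner ℂ (S t g) h : ℂ) = inner ℂ g (S t h))
    (hA : ∀ t (g h : E), (inner ℂ (A t g) h : ℂ) = -inner ℂ g (A t h))
    (hS' : ∀ t (g h : E), (inner ℂ (S' t g) h : ℂ) = inner ℂ g (S' t h))
    (hf : ∀ t, HasDerivAt f (f' t) t)
    (hSf : ∀ t, HasDerivAt (fun τ => S τ (f τ)) (S' t (f t) + S t (f' t)) t) :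
    ∀ t : ℝ, deriv (fun τ => (inner ℂ (S τ (f τ)) (f τ) : ℂ).re) t ≥
      (inner ℂ (S' t (f t) + (S t (A t (f t)) - A t (S t (f t)))) (f t) : ℂ).re -
        (1 / 2) * ‖f' t - A t (f t) - S t (f t)‖ ^ 2 :=
  stmt8_general E S A S' f f' hS hA hf hSf
end

section
/- Let a : [-1,1] → (0,∞) be smooth, even, nonincreasing on [0,1], and b : [-1,1] → [0,∞) even with b̈ = -2c(16c^{-3} - c̈) where c = a^{-1/2}. Let T solve ∂ₜ((1/a)∂ₜT) = -|b̈|²/F(a) on [-1,1] with T(-1)=T(1)=0, where F(a) = 2c^{-1}(16c^{-3} - c̈). Then T(t) = 2∫ₜ¹∫₀ˢ (a(s)/a(τ)) c(τ)(16c(τ)^{-3} - c̈(τ)) dτ ds for t ∈ [0,1], and T(t) ≤ b(t) on [-1,1]. -/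
open Set intervalIntegral

/-- The solution `T` of `∂ₜ((1/a)∂ₜT) = -|b̈|²/F(a)`, `T(±1) = 0`, is given by the explicit
double integral `T(t) = 2∫ₜ¹∫₀ˢ (a(s)/a(τ)) c(τ)(16c(τ)⁻³ - c̈(τ)) dτ ds` on `[0,1]`, and
satisfies `T ≤ b` on `[-1,1]`. -/
theorem stmt17 (a c b T Fa : ℝ → ℝ)
    (ha : ContDiff ℝ (⊤ : ℕ∞) a) (hapos : ∀ t : ℝ, 0 < a t) (haeven : ∀ t : ℝ, a (-t) = a t)
    (hamono : ∀ t ∈ Icc (0 : ℝ) 1, deriv a t ≤ 0)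
    (hc : ∀ t : ℝ, c t = (a t) ^ (-(1 / 2 : ℝ)))
    (hcdd : ∀ t ∈ Icc (-1 : ℝ) 1, deriv (deriv c) t < 16 / (c t) ^ 3)
    (hb : ContDiff ℝ 2 b)
    (hbnn : ∀ t ∈ Icc (-1 : ℝ) 1, 0 ≤ b t)
    (hbeven : ∀ t ∈ Icc (-1 : ℝ) 1, b (-t) = b t)
    (hbeq : ∀ t ∈ Icc (-1 : ℝ) 1,
      deriv (deriv b) t = -2 * c t * (16 / (c t) ^ 3 - deriv (deriv c) t))
    (hbm : b (-1) = 0) (hbp : b 1 = 0)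
    (hFa : ∀ t : ℝ, Fa t = 2 / c t * (16 / (c t) ^ 3 - deriv (deriv c) t))
    (hT : ContDiff ℝ 2 T)
    (hTeq : ∀ t ∈ Icc (-1 : ℝ) 1,
      deriv (fun τ => 1 / a τ * deriv T τ) t = -(deriv (deriv b) t) ^ 2 / Fa t)
    (hTm : T (-1) = 0) (hTp : T 1 = 0) :
    (∀ t ∈ Icc (0 : ℝ) 1, T t =
      2 * ∫ s in t..1, ∫ τ in (0 : ℝ)..s,
        a s / a τ * (c τ * (16 / (c τ) ^ 3 - deriv (deriv c) τ))) ∧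
    (∀ t ∈ Icc (-1 : ℝ) 1, T t ≤ b t) := by
  -- Basic facts
  have haneq : ∀ t : ℝ, a t ≠ 0 := fun t => (hapos t).ne'
  have hacont : Continuous a := ha.continuous
  have h21 : ((2 : WithTop ℕ∞)) = 1 + 1 := by norm_num
  have hbd1 : ContDiff ℝ 1 (deriv b) := (contDiff_succ_iff_deriv.mp (h21 ▸ hb)).2.2
  have hbdd_cont : Continuous (deriv (deriv b)) := hbd1.continuous_deriv le_rfl
  have hTd1 : ContDiff ℝ 1 (deriv T) := (contDiff_succ_iff_deriv.mp (h21 ▸ hT)).2.2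
  have hT1 : ContDiff ℝ 1 T := hT.of_le (by norm_num)
  have hb1 : ContDiff ℝ 1 b := hb.of_le (by norm_num)
  -- Evenness of c and c''
  have hceven : ∀ t : ℝ, c (-t) = c t := fun t => by rw [hc, hc, haeven]
  have hcfun : (fun t => c (-t)) = c := funext hceven
  have hc'odd : ∀ t : ℝ, deriv c (-t) = -deriv c t := by
    intro t
    have h := deriv_comp_neg (f := c) (x := t)
    rw [hcfun] at h
    linarith
  have hc''even : ∀ t : ℝ, deriv (deriv c) (-t) = deriv (deriv c) t := by
    intro t
    have h1 : (fun x => deriv c (-x)) = fun x => -deriv c x := funext fun x => hc'odd x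
    have h2 := deriv_comp_neg (f := deriv c) (x := t)
    rw [h1, deriv.fun_neg] at h2
    linarith
  have hcpos : ∀ t : ℝ, 0 < c t := fun t => by
    rw [hc]; exact Real.rpow_pos_of_pos (hapos t) _
  have hXpos : ∀ t ∈ Icc (-1 : ℝ) 1, 0 < 16 / c t ^ 3 - deriv (deriv c) t :=
    fun t ht => sub_pos.mpr (hcdd t ht)
  have hmem : ∀ t ∈ Icc (-1 : ℝ) 1, -t ∈ Icc (-1 : ℝ) 1 := fun t ht =>
    ⟨by linarith [ht.2], by linarith [ht.1]⟩
  have hb''even : ∀ t ∈ Icc (-1 : ℝ) 1, deriv (deriv b) (-t) = deriv (deriv b) t := by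
    intro t ht
    rw [hbeq t ht, hbeq (-t) (hmem t ht), hceven, hc''even]
  -- The function g = b''/a and its primitive P
  set g : ℝ → ℝ := fun τ => deriv (deriv b) τ / a τ with hgdef
  have hgcont : Continuous g := hbdd_cont.div hacont haneq
  have hgeven : ∀ t ∈ Icc (-1 : ℝ) 1, g (-t) = g t := fun t ht => by
    simp only [hgdef]; rw [hb''even t ht, haeven]
  set P : ℝ → ℝ := fun s => ∫ τ in (0 : ℝ)..s, g τ with hPdef
  have hPcont : Continuous P :=
    intervalIntegral.continuous_primitive (fun x y => hgcont.intervalIntegrable x y) 0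
  -- FTC helper
  have hFTC : ∀ f : ℝ → ℝ, ContDiff ℝ 1 f → ∀ x y : ℝ,
      (∫ s in x..y, deriv f s) = f y - f x := by
    intro f hf x y
    exact intervalIntegral.integral_deriv_eq_sub
      (fun z _ => (hf.differentiable one_ne_zero).differentiableAt)
      ((hf.continuous_deriv le_rfl).intervalIntegrable x y)
  -- u = (1/a) T' and its derivative equals g on Icc
  set u : ℝ → ℝ := fun τ => 1 / a τ * deriv T τ with hudef
  have hucd : ContDiff ℝ 1 u :=
    (contDiff_const.div (ha.of_le (by simp)) haneq).mul hTd1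
  have hkey : ∀ t ∈ Icc (-1 : ℝ) 1, deriv u t = g t := by
    intro t ht
    have hX := hXpos t ht
    have hC := hcpos t
    have hA := hapos t
    have hc2 : c t ^ 2 * a t = 1 := by
      rw [hc, ← Real.rpow_natCast (a t ^ (-(1 / 2 : ℝ))) 2, ← Real.rpow_mul hA.le]
      norm_num
      rw [Real.rpow_neg_one]
      field_simp
    have hXne : 16 / c t ^ 3 - deriv (deriv c) t ≠ 0 := hX.ne'
    have hAe : a t = 1 / c t ^ 2 := by
      rw [eq_div_iff (pow_ne_zero 2 hC.ne')]
      linarith [hc2]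
    rw [hudef, hTeq t ht, hgdef]
    simp only
    rw [hFa t, hbeq t ht, hAe]
    set X := 16 / c t ^ 3 - deriv (deriv c) t with hXdef
    field_simp [hC.ne', hXne]
  set K : ℝ := u 0 with hKdef
  have hsub : ∀ t ∈ Icc (-1 : ℝ) 1, uIcc (0 : ℝ) t ⊆ Icc (-1 : ℝ) 1 := fun t ht =>
    uIcc_subset_Icc ⟨by norm_num, by norm_num⟩ ht
  have huval : ∀ t ∈ Icc (-1 : ℝ) 1, u t = K + P t := by
    intro t ht
    have h1 : (∫ s in (0 : ℝ)..t, deriv u s) = u t - u 0 := hFTC u hucd 0 t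
    have h2 : (∫ s in (0 : ℝ)..t, deriv u s) = P t :=
      intervalIntegral.integral_congr fun z hz => hkey z (hsub t ht hz)
    rw [h2] at h1
    rw [hKdef]; linarith
  have hT'val : ∀ t ∈ Icc (-1 : ℝ) 1, deriv T t = a t * (K + P t) := by
    intro t ht
    have hA := haneq t
    have h := huval t ht
    rw [hudef] at h
    simp only at h
    rw [← h]
    field_simp
  -- Oddness of P
  have hPodd : ∀ s ∈ Icc (-1 : ℝ) 1, P (-s) = -P s := by
    intro s hs
    have h1 : (∫ τ in (0 : ℝ)..s, g (-τ)) = ∫ τ in (-s)..(0 : ℝ), g τ := by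
      simpa using intervalIntegral.integral_comp_neg (a := 0) (b := s) (f := g)
    have h2 : (∫ τ in (0 : ℝ)..s, g (-τ)) = P s :=
      intervalIntegral.integral_congr fun z hz => hgeven z (hsub s hs hz)
    have h3 : P (-s) = -∫ τ in (-s)..(0 : ℝ), g τ := intervalIntegral.integral_symm (-s) 0
    rw [h3, ← h1, h2]
  have hIcc : uIcc (-1 : ℝ) 1 = Icc (-1 : ℝ) 1 := uIcc_of_le (by norm_num)
  -- K = 0
  have hK0 : K = 0 := by
    have h0 : (∫ s in (-1 : ℝ)..1, deriv T s) = 0 := by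
      rw [hFTC T hT1 (-1) 1, hTp, hTm]; ring
    have h1 : (∫ s in (-1 : ℝ)..1, deriv T s)
        = K * (∫ s in (-1 : ℝ)..1, a s) + ∫ s in (-1 : ℝ)..1, a s * P s := by
      rw [intervalIntegral.integral_congr (g := fun s => K * a s + a s * P s)
        (fun z hz => by rw [hT'val z (hIcc ▸ hz)]; ring)]
      rw [intervalIntegral.integral_add (f := fun s => K * a s) (g := fun s => a s * P s) ((continuous_const.mul hacont : Continuous fun s => K * a s).intervalIntegrable _ _)
        ((hacont.mul hPcont : Continuous fun s => a s * P s).intervalIntegrable _ _), intervalIntegral.integral_const_mul]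
    have hodd0 : (∫ s in (-1 : ℝ)..1, a s * P s) = 0 := by
      have h2 : (∫ s in (-1 : ℝ)..1, a (-s) * P (-s)) = ∫ s in (-1 : ℝ)..1, a s * P s := by
        simpa using intervalIntegral.integral_comp_neg (a := -1) (b := 1)
          (f := fun s => a s * P s)
      have h3 : (∫ s in (-1 : ℝ)..1, a (-s) * P (-s)) = -∫ s in (-1 : ℝ)..1, a s * P s := by
        rw [← intervalIntegral.integral_neg]
        exact intervalIntegral.integral_congr fun z hz => by
          rw [haeven, hPodd z (hIcc ▸ hz)]; ring
      linarith
    have hapos' : 0 < ∫ s in (-1 : ℝ)..1, a s :=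
      intervalIntegral_pos_of_pos_on (hacont.intervalIntegrable _ _)
        (fun x _ => hapos x) (by norm_num)
    have := h1.symm.trans h0
    rw [hodd0] at this
    have : K * (∫ s in (-1 : ℝ)..1, a s) = 0 := by linarith
    rcases mul_eq_zero.mp this with h | h
    · exact h
    · exact absurd h hapos'.ne'
  have hT'h : ∀ t ∈ Icc (-1 : ℝ) 1, deriv T t = a t * P t := by
    intro t ht
    rw [hT'val t ht, hK0]; ring
  -- T t = -∫ₜ¹ a s P s for t ∈ [0,1]
  have hsub01 : ∀ t ∈ Icc (0 : ℝ) 1, t ∈ Icc (-1 : ℝ) 1 := fun t ht =>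
    ⟨by linarith [ht.1], ht.2⟩
  have hTval : ∀ t ∈ Icc (0 : ℝ) 1, T t = -∫ s in t..1, a s * P s := by
    intro t ht
    have h1 : (∫ s in t..1, deriv T s) = T 1 - T t := hFTC T hT1 t 1
    have h2 : (∫ s in t..1, deriv T s) = ∫ s in t..1, a s * P s :=
      intervalIntegral.integral_congr fun z hz =>
        hT'h z (uIcc_subset_Icc (hsub01 t ht) (by norm_num) hz)
    rw [h2, hTp] at h1
    linarith
  -- The explicit formula
  have formula : ∀ t ∈ Icc (0 : ℝ) 1, T t =
      2 * ∫ s in t..1, ∫ τ in (0 : ℝ)..s,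
        a s / a τ * (c τ * (16 / (c τ) ^ 3 - deriv (deriv c) τ)) := by
    intro t ht
    have hFs : ∀ s ∈ Icc (0 : ℝ) 1,
        (∫ τ in (0 : ℝ)..s, a s / a τ * (c τ * (16 / (c τ) ^ 3 - deriv (deriv c) τ)))
        = -(1 / 2) * (a s * P s) := by
      intro s hs
      have heq : (∫ τ in (0 : ℝ)..s, a s / a τ * (c τ * (16 / (c τ) ^ 3 - deriv (deriv c) τ)))
          = ∫ τ in (0 : ℝ)..s, (a s * -(1 / 2)) * g τ := by
        refine intervalIntegral.integral_congr fun z hz => ?_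
        have hz' : z ∈ Icc (-1 : ℝ) 1 := hsub s (hsub01 s hs) hz
        simp only [hgdef]
        rw [hbeq z hz']
        field_simp
      rw [heq, intervalIntegral.integral_const_mul, hPdef]
      ring
    have heq2 : (∫ s in t..1, ∫ τ in (0 : ℝ)..s,
        a s / a τ * (c τ * (16 / (c τ) ^ 3 - deriv (deriv c) τ)))
        = ∫ s in t..1, -(1 / 2) * (a s * P s) := by
      refine intervalIntegral.integral_congr fun z hz => ?_
      exact hFs z (uIcc_subset_Icc ht (by norm_num) hz)
    rw [heq2, intervalIntegral.integral_const_mul, hTval t ht]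
    ring
  -- Antitonicity of a on [0,1]
  have haAnti : AntitoneOn a (Icc (0 : ℝ) 1) := by
    refine antitoneOn_of_deriv_nonpos (convex_Icc 0 1) hacont.continuousOn
      (fun x _ => ((ha.differentiable (by simp)).differentiableAt).differentiableWithinAt) ?_
    intro x hx
    rw [interior_Icc] at hx
    exact hamono x ⟨hx.1.le, hx.2.le⟩
  -- deriv b 0 = 0
  have hb'0 : deriv b 0 = 0 := by
    have hev : (fun x => b (-x)) =ᶠ[nhds (0 : ℝ)] b := by
      filter_upwards [Icc_mem_nhds (by norm_num : (-1 : ℝ) < 0) (by norm_num : (0 : ℝ) < 1)]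
        with x hx
      exact hbeven x hx
    have h1 := hev.deriv_eq
    rw [deriv_comp_neg] at h1
    simp only [neg_zero] at h1
    linarith
  have hb'val : ∀ s : ℝ, deriv b s = ∫ τ in (0 : ℝ)..s, deriv (deriv b) τ := by
    intro s
    have h := hFTC (deriv b) hbd1 0 s
    rw [hb'0] at h
    linarith
  -- T ≤ b on [0,1]
  have hineq01 : ∀ t ∈ Icc (0 : ℝ) 1, T t ≤ b t := by
    intro t ht
    have hbt : b t = -∫ s in t..1, deriv b s := by
      have h := hFTC b hb1 t 1
      rw [hbp] at h
      linarith
    have hnn : ∀ s ∈ Icc t 1, 0 ≤ a s * P s - deriv b s := by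
      intro s hs
      have hs' : s ∈ Icc (0 : ℝ) 1 := ⟨le_trans ht.1 hs.1, hs.2⟩
      have hsplit : a s * P s - deriv b s
          = ∫ τ in (0 : ℝ)..s, (a s * g τ - deriv (deriv b) τ) := by
        rw [intervalIntegral.integral_sub (f := fun τ => a s * g τ)
          ((continuous_const.mul hgcont).intervalIntegrable _ _)
          (hbdd_cont.intervalIntegrable _ _), intervalIntegral.integral_const_mul,
          ← hb'val s, hPdef]
      rw [hsplit]
      refine intervalIntegral.integral_nonneg hs'.1 fun τ hτ => ?_
      have hτ1 : τ ∈ Icc (0 : ℝ) 1 := ⟨hτ.1, le_trans hτ.2 hs'.2⟩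
      have hτI : τ ∈ Icc (-1 : ℝ) 1 := hsub01 τ hτ1
      have hbb : deriv (deriv b) τ ≤ 0 := by
        have := hXpos τ hτI
        have := hcpos τ
        rw [hbeq τ hτI]
        nlinarith
      have hratio : a s ≤ a τ := haAnti hτ1 hs' hτ.2
      have hAτ := hapos τ
      simp only [hgdef]
      have hrw : a s * (deriv (deriv b) τ / a τ) - deriv (deriv b) τ
          = deriv (deriv b) τ * (a s - a τ) / a τ := by
        field_simp
      rw [hrw]
      apply div_nonneg _ hAτ.le
      nlinarith [mul_nonneg (neg_nonneg.mpr hbb) (sub_nonneg.mpr hratio)]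
    have hint : 0 ≤ ∫ s in t..1, (a s * P s - deriv b s) :=
      intervalIntegral.integral_nonneg ht.2 hnn
    have hsplit2 : (∫ s in t..1, (a s * P s - deriv b s))
        = (∫ s in t..1, a s * P s) - ∫ s in t..1, deriv b s :=
      intervalIntegral.integral_sub ((hacont.mul hPcont).intervalIntegrable _ _)
        ((hbd1.continuous).intervalIntegrable _ _)
    rw [hTval t ht, hbt]
    rw [hsplit2] at hint
    linarith
  refine ⟨formula, ?_⟩
  intro t ht
  rcases le_or_gt 0 t with h0 | h0
  · exact hineq01 t ⟨h0, ht.2⟩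
  · have hmt : -t ∈ Icc (0 : ℝ) 1 := ⟨by linarith, by linarith [ht.1]⟩
    have hTt : T t = T (-t) := by
      have h1 : T t = ∫ s in (-1 : ℝ)..t, a s * P s := by
        have h := hFTC T hT1 (-1) t
        have hcongr : (∫ s in (-1 : ℝ)..t, deriv T s) = ∫ s in (-1 : ℝ)..t, a s * P s :=
          intervalIntegral.integral_congr fun z hz =>
            hT'h z (uIcc_subset_Icc (by norm_num) ht hz)
        rw [hcongr, hTm] at h
        linarith
      have h2 : T (-t) = -∫ s in (-t)..(1 : ℝ), a s * P s := hTval (-t) hmt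
      have h3 : (∫ s in (-t)..(1 : ℝ), a (-s) * P (-s)) = ∫ s in (-1 : ℝ)..t, a s * P s := by
        simpa using intervalIntegral.integral_comp_neg (a := -t) (b := 1)
          (f := fun s => a s * P s)
      have h4 : (∫ s in (-t)..(1 : ℝ), a (-s) * P (-s))
          = -∫ s in (-t)..(1 : ℝ), a s * P s := by
        rw [← intervalIntegral.integral_neg]
        refine intervalIntegral.integral_congr fun z hz => ?_
        have hz' : z ∈ Icc (-1 : ℝ) 1 :=
          uIcc_subset_Icc (hsub01 (-t) hmt) (by norm_num) hz
        rw [haeven, hPodd z hz']; ring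
      rw [h1, h2, ← h3, h4]
    rw [hTt, ← hbeven t ht]
    exact hineq01 (-t) hmt
end

section
/- Let μ > 0 and suppose for some measure space setting that for all ξ ∈ ℝⁿ and t ∈ [-1,1], ∫_{ℝⁿ} e^{2a(t)|x|² - 2|ξ|²b(t)(1 - a(t)b(t)) + 4a(t)b(t)x·ξ} |u(x,t)|² dx ≤ C², where a, b : [-1,1] → (0,∞) are continuous, 1 - a(t)b(t) > 0 on [-1,1], and u(·,t) ∈ L²(ℝⁿ). Then for each ε > 0 and t ∈ [-1,1], ‖e^{a_ε(t)|x|²} u(·,t)‖_{L²(ℝⁿ)} ≤ (1 + 1/ε)^{n/4} C, where a_ε(t) = (1+ε)a(t)/(1+ε - a(t)b(t)). -/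
/-!
Multiply the hypothesis at frequency `ξ` by the Gaussian `exp (-2εb|ξ|²)` and integrate in `ξ`.
By Tonelli the left side becomes `∫ |u|²` against a Gaussian integral in `ξ`, which equals
`(π / (2b(1+ε-ab)))^{n/2} exp (2 a_ε |x|²)`; the right side becomes `(π / (2εb))^{n/2} C²`.
The ratio of the two constants is `((1+ε-ab)/ε)^{n/2} ≤ (1 + 1/ε)^{n/2}`.
-/

open Set MeasureTheory Real

lemma neg_mul_sq_add_mul_eq {α : ℝ} (hα : 0 < α) (β x : ℝ) :
    -α * x ^ 2 + β * x = -α * (x - β / (2 * α)) ^ 2 + β ^ 2 / (4 * α) := by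
  field_simp
  ring

lemma integrable_exp_neg_mul_sq_add_mul {α : ℝ} (hα : 0 < α) (β : ℝ) :
    Integrable fun x : ℝ => exp (-α * x ^ 2 + β * x) := by
  simp_rw [neg_mul_sq_add_mul_eq hα β, exp_add]
  exact ((integrable_exp_neg_mul_sq hα).comp_sub_right _).mul_const _

lemma integral_exp_neg_mul_sq_add_mul {α : ℝ} (hα : 0 < α) (β : ℝ) :
    ∫ x : ℝ, exp (-α * x ^ 2 + β * x) = √(π / α) * exp (β ^ 2 / (4 * α)) := by
  simp_rw [neg_mul_sq_add_mul_eq hα β, exp_add]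
  rw [integral_mul_const, integral_sub_right_eq_self (fun x => exp (-α * x ^ 2)),
    integral_gaussian]

lemma lintegral_exp_neg_mul_sum_sq_add {ι : Type*} [Fintype ι] {α : ℝ} (hα : 0 < α)
    (β : ι → ℝ) :
    ∫⁻ ξ : ι → ℝ, ENNReal.ofReal (exp (-α * ∑ i, ξ i ^ 2 + ∑ i, β i * ξ i)) =
      ENNReal.ofReal
        ((π / α) ^ ((Fintype.card ι : ℝ) / 2) * exp ((∑ i, β i ^ 2) / (4 * α))) := by
  have hprod : ∀ ξ : ι → ℝ, exp (-α * ∑ i, ξ i ^ 2 + ∑ i, β i * ξ i) =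
      ∏ i, exp (-α * ξ i ^ 2 + β i * ξ i) := by
    intro ξ
    rw [← exp_sum, Finset.sum_add_distrib, Finset.mul_sum]
  simp_rw [hprod]
  rw [volume_pi, ← ofReal_integral_eq_lintegral_ofReal
      (Integrable.fintype_prod fun i => integrable_exp_neg_mul_sq_add_mul hα (β i))
      (Filter.Eventually.of_forall fun ξ => Finset.prod_nonneg fun i _ => (exp_pos _).le),
    integral_fintype_prod_eq_prod (fun i (x : ℝ) => exp (-α * x ^ 2 + β i * x))]
  simp_rw [integral_exp_neg_mul_sq_add_mul hα, Finset.prod_mul_distrib, Finset.prod_const,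
    ← exp_sum, ← Finset.sum_div, Finset.card_univ, sqrt_eq_rpow, ← rpow_natCast,
    ← rpow_mul (div_pos pi_pos hα).le]
  congr 3
  ring

lemma lintegral_lintegral_mul_le {X Y : Type*} [MeasurableSpace X] [MeasurableSpace Y]
    {μ : Measure X} {ν : Measure Y} [SFinite μ] [SFinite ν] {w : Y → ENNReal}
    {G : Y → X → ENNReal} (hw : Measurable w) (hG : Measurable (Function.uncurry G))
    {K : ENNReal} (hK : ∀ y, ∫⁻ x, G y x ∂μ ≤ K) :
    ∫⁻ x, ∫⁻ y, w y * G y x ∂ν ∂μ ≤ (∫⁻ y, w y ∂ν) * K := by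
  rw [lintegral_lintegral_swap
      ((hw.comp measurable_snd).mul (hG.comp measurable_swap)).aemeasurable,
    ← lintegral_mul_const _ hw]
  refine lintegral_mono fun y => ?_
  rw [lintegral_const_mul _ hG.of_uncurry_left]
  exact mul_le_mul_right (hK y) _

section ShiftWeight

variable {ι : Type*} [Fintype ι]

/- Completing the square, this is `exp (2 A |x + B ξ|² - 2 B |ξ|²)`. -/
noncomputable def shiftWeight (A B : ℝ) (x ξ : ι → ℝ) : ℝ :=
  exp (2 * A * (∑ i, x i ^ 2) - 2 * (∑ i, ξ i ^ 2) * B * (1 - A * B) +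
    4 * A * B * (∑ i, x i * ξ i))

lemma measurable_shiftWeight (A B : ℝ) :
    Measurable fun p : (ι → ℝ) × (ι → ℝ) => shiftWeight A B p.1 p.2 := by
  unfold shiftWeight
  fun_prop

lemma lintegral_exp_mul_shiftWeight {A B ε : ℝ} (hB : 0 < B) (hD : 0 < 1 + ε - A * B)
    (x : ι → ℝ) (c : ℝ) :
    ∫⁻ ξ, ENNReal.ofReal (exp (-(2 * ε * B) * ∑ i, ξ i ^ 2)) *
        ENNReal.ofReal (shiftWeight A B x ξ * c) =
      ENNReal.ofReal ((π / (2 * B * (1 + ε - A * B))) ^ ((Fintype.card ι : ℝ) / 2)) *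
        ENNReal.ofReal (exp (2 * ((1 + ε) * A / (1 + ε - A * B)) * ∑ i, x i ^ 2) * c) := by
  set D := 1 + ε - A * B
  have hBD : 0 < 2 * B * D := by positivity
  have hsplit : ∀ ξ : ι → ℝ, ENNReal.ofReal (exp (-(2 * ε * B) * ∑ i, ξ i ^ 2)) *
        ENNReal.ofReal (shiftWeight A B x ξ * c) =
      ENNReal.ofReal (exp (-(2 * B * D) * ∑ i, ξ i ^ 2 + ∑ i, 4 * A * B * x i * ξ i)) *
        ENNReal.ofReal (exp (2 * A * ∑ i, x i ^ 2) * c) := by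
    intro ξ
    rw [shiftWeight, ← ENNReal.ofReal_mul (exp_pos _).le, ← ENNReal.ofReal_mul (exp_pos _).le,
      ← mul_assoc, ← mul_assoc, ← exp_add, ← exp_add,
      Finset.sum_congr rfl fun i _ => mul_assoc (4 * A * B) (x i) (ξ i), ← Finset.mul_sum]
    congr 3
    ring
  have hsq : ∑ i, (4 * A * B * x i) ^ 2 = 16 * A ^ 2 * B ^ 2 * ∑ i, x i ^ 2 := by
    rw [Finset.mul_sum]
    exact Finset.sum_congr rfl fun i _ => by ring
  simp_rw [hsplit]
  rw [lintegral_mul_const _ (by fun_prop), lintegral_exp_neg_mul_sum_sq_add hBD, hsq,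
    ← ENNReal.ofReal_mul (by positivity), ← ENNReal.ofReal_mul (by positivity), mul_assoc,
    ← mul_assoc (exp _), ← exp_add]
  congr 4
  field_simp
  ring

lemma lintegral_exp_mul_le_of_forall_shiftWeight {A B ε : ℝ} (hA : 0 ≤ A) (hB : 0 < B)
    (hε : 0 < ε) (hAB : A * B < 1 + ε) {g : (ι → ℝ) → ℝ} (hg : Measurable g)
    {K : ENNReal}
    (hK : ∀ ξ : ι → ℝ, ∫⁻ x, ENNReal.ofReal (shiftWeight A B x ξ * g x) ≤ K) :
    ∫⁻ x, ENNReal.ofReal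
        (exp (2 * ((1 + ε) * A / (1 + ε - A * B)) * ∑ i, x i ^ 2) * g x) ≤
      ENNReal.ofReal ((1 + 1 / ε) ^ ((Fintype.card ι : ℝ) / 2)) * K := by
  set D := 1 + ε - A * B
  set m := (Fintype.card ι : ℝ) / 2
  have hD : 0 < D := by linarith
  have hc : 0 < (π / (2 * B * D)) ^ m := by positivity
  have hweight : ∫⁻ ξ : ι → ℝ, ENNReal.ofReal (exp (-(2 * ε * B) * ∑ i, ξ i ^ 2)) =
      ENNReal.ofReal ((π / (2 * ε * B)) ^ m) := by
    simpa [m] using lintegral_exp_neg_mul_sum_sq_add (by positivity : 0 < 2 * ε * B)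
      (fun _ : ι => 0)
  have averaged := lintegral_lintegral_mul_le (μ := volume) (ν := volume)
    (w := fun ξ : ι → ℝ => ENNReal.ofReal (exp (-(2 * ε * B) * ∑ i, ξ i ^ 2)))
    (by fun_prop)
    (((measurable_shiftWeight A B).comp measurable_swap).mul (hg.comp measurable_snd)
      |>.ennreal_ofReal) hK
  simp_rw [lintegral_exp_mul_shiftWeight hB hD] at averaged
  rw [lintegral_const_mul _ (by fun_prop), hweight] at averaged
  calc _ ≤ ENNReal.ofReal ((π / (2 * ε * B)) ^ m / (π / (2 * B * D)) ^ m) * K := by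
        rw [← ENNReal.mul_le_mul_iff_right (ENNReal.ofReal_pos.2 hc).ne' ENNReal.ofReal_ne_top,
          ← mul_assoc, ← ENNReal.ofReal_mul hc.le, mul_div_cancel₀ _ hc.ne']
        exact averaged
    _ = ENNReal.ofReal ((D / ε) ^ m) * K := by
        rw [← div_rpow (by positivity) (by positivity)]
        congr 3
        field_simp
    _ ≤ _ := by
        gcongr
        rw [div_le_iff₀ hε, add_mul, one_div, inv_mul_cancel₀ hε.ne']
        nlinarith [mul_nonneg hA hB.le]

end ShiftWeight

theorem stmt18_general (n : ℕ) (C : ℝ) (a b : ℝ → ℝ)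
    (hapos : ∀ t ∈ Icc (-1 : ℝ) 1, 0 < a t) (hbpos : ∀ t ∈ Icc (-1 : ℝ) 1, 0 < b t)
    (hab : ∀ t ∈ Icc (-1 : ℝ) 1, 0 < 1 - a t * b t)
    (u : (Fin n → ℝ) → ℝ → ℂ)
    (hmeas : ∀ t : ℝ, Measurable fun x => u x t)
    (hyp : ∀ (ξ : Fin n → ℝ), ∀ t ∈ Icc (-1 : ℝ) 1,
      (∫⁻ x : Fin n → ℝ, ENNReal.ofReal
        (Real.exp (2 * a t * (∑ i, (x i) ^ 2) -
            2 * (∑ i, (ξ i) ^ 2) * b t * (1 - a t * b t) +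
            4 * a t * b t * (∑ i, x i * ξ i)) * ‖u x t‖ ^ 2)) ≤ ENNReal.ofReal (C ^ 2)) :
    ∀ ε > (0 : ℝ), ∀ t ∈ Icc (-1 : ℝ) 1,
      (∫⁻ x : Fin n → ℝ, ENNReal.ofReal
        (Real.exp (2 * ((1 + ε) * a t / (1 + ε - a t * b t)) * (∑ i, (x i) ^ 2)) *
          ‖u x t‖ ^ 2)) ≤
      ENNReal.ofReal ((1 + 1 / ε) ^ ((n : ℝ) / 2) * C ^ 2) := by
  intro ε hε t ht
  have hab_lt : a t * b t < 1 + ε := by linarith [hab t ht]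
  calc _ ≤ ENNReal.ofReal ((1 + 1 / ε) ^ ((Fintype.card (Fin n) : ℝ) / 2)) *
          ENNReal.ofReal (C ^ 2) :=
        lintegral_exp_mul_le_of_forall_shiftWeight (hapos t ht).le (hbpos t ht) hε hab_lt
          ((hmeas t).norm.pow_const 2) fun ξ => hyp ξ t ht
    _ = _ := by rw [Fintype.card_fin, ← ENNReal.ofReal_mul (by positivity)]

/-- Gaussian-shift improvement: if
`∫ e^{2a(t)|x|² - 2|ξ|²b(t)(1 - a(t)b(t)) + 4a(t)b(t)x·ξ} |u(x,t)|² dx ≤ C²` for all `ξ ∈ ℝⁿ`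
and `t ∈ [-1,1]`, with `0 < 1 - a b`, then for every `ε > 0`,
`‖e^{a_ε(t)|x|²} u(·,t)‖² ≤ (1 + 1/ε)^{n/2} C²` where `a_ε = (1+ε)a/(1+ε - ab)`. -/
theorem stmt18 (n : ℕ) (C : ℝ) (hC : 0 ≤ C) (a b : ℝ → ℝ)
    (hacont : Continuous a) (hbcont : Continuous b)
    (hapos : ∀ t ∈ Icc (-1 : ℝ) 1, 0 < a t) (hbpos : ∀ t ∈ Icc (-1 : ℝ) 1, 0 < b t)
    (hab : ∀ t ∈ Icc (-1 : ℝ) 1, 0 < 1 - a t * b t)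
    (u : (Fin n → ℝ) → ℝ → ℂ)
    (hmeas : ∀ t : ℝ, Measurable fun x => u x t)
    (hL2 : ∀ t ∈ Icc (-1 : ℝ) 1, MemLp (fun x => u x t) 2 volume)
    (hyp : ∀ (ξ : Fin n → ℝ), ∀ t ∈ Icc (-1 : ℝ) 1,
      (∫⁻ x : Fin n → ℝ, ENNReal.ofReal
        (Real.exp (2 * a t * (∑ i, (x i) ^ 2) -
            2 * (∑ i, (ξ i) ^ 2) * b t * (1 - a t * b t) +
            4 * a t * b t * (∑ i, x i * ξ i)) * ‖u x t‖ ^ 2)) ≤ ENNReal.ofReal (C ^ 2)) :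
    ∀ ε > (0 : ℝ), ∀ t ∈ Icc (-1 : ℝ) 1,
      (∫⁻ x : Fin n → ℝ, ENNReal.ofReal
        (Real.exp (2 * ((1 + ε) * a t / (1 + ε - a t * b t)) * (∑ i, (x i) ^ 2)) *
          ‖u x t‖ ^ 2)) ≤
      ENNReal.ofReal ((1 + 1 / ε) ^ ((n : ℝ) / 2) * C ^ 2) :=
  stmt18_general n C a b hapos hbpos hab u hmeas hyp
end
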